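/- Let K be a number field with at least one real embedding. Then there exists an algebraic integer α ∈ O_K with K = Q(α) and H(α) ≤ c_K = (2/π)^{s/d}|Δ_K|^{1/(2d)}. -/

import Mathlib

open NumberField

/-- `c_K = (2/π)^{s/d} |Δ_K|^{1/(2d)}`. -/
noncomputable def minkowskiConst (K : Type*) [Field K] [NumberField K] : ℝ :=
  (2 / Real.pi) ^ ((InfinitePlace.nrComplexPlaces K : ℝ) / (Module.finrank ℚ K)) *
    |(discr K : ℝ)| ^ ((1 : ℝ) / (2 * (Module.finrank ℚ K : ℝ)))

/-- Absolute multiplicative Weil height of an algebraic integer of `K`. -/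
noncomputable def intHeight {K : Type*} [Field K] [NumberField K] (α : K) : ℝ :=
  (∏ φ : K →+* ℂ, max 1 (‖φ α‖)) ^ ((Module.finrank ℚ K : ℝ)⁻¹)

/-- The normalized absolute value `|·|_v = ‖·‖_v^{d_v/d}` at an infinite place. -/
noncomputable def placeNorm {K : Type*} [Field K] [NumberField K]
    (v : InfinitePlace K) (α : K) : ℝ :=
  (v α) ^ ((v.mult : ℝ) / (Module.finrank ℚ K : ℝ))

/-!
Minkowski's theorem applied to the box `{w₀ < B, w < 1 for w ≠ w₀}`, whose volume exceeds the
Minkowski bound exactly when `B > c_K ^ d`, gives a nonzero `α ∈ O_K` that is small at every place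
except the real place `w₀`; such an `α` generates `K`. Its height is `w₀(α)^{1/d}`: the other
places contribute `max 1 (w α) = 1`, and `w₀(α) ≥ 1` since `N(α)` is a nonzero integer. As there
are finitely many integers of bounded house, letting `B` decrease to `c_K ^ d` yields one with
`w₀(α) ≤ c_K ^ d`.
-/

open NumberField InfinitePlace mixedEmbedding Module
open scoped IntermediateField

namespace NumberField

variable {K : Type*} [Field K] [NumberField K]

open scoped Classical in
theorem prod_embeddings_max_one_eq_prod_infinitePlace (x : K) :
    ∏ φ : K →+* ℂ, max 1 ‖φ x‖ = ∏ w : InfinitePlace K, max 1 (w x) ^ w.mult := by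
  rw [← Finset.prod_fiberwise Finset.univ InfinitePlace.mk (fun φ => max 1 ‖φ x‖)]
  refine Finset.prod_congr rfl fun w _ => ?_
  have h (φ : K →+* ℂ) (hφ : φ ∈ ({φ | InfinitePlace.mk φ = w} : Finset _)) :
      max 1 ‖φ x‖ = max 1 (w x) := by
    rw [← (Finset.mem_filter.mp hφ).2, InfinitePlace.apply]
  rw [Finset.prod_congr rfl h, Finset.prod_const, card_filter_mk_eq]

theorem intHeight_eq_of_lt_one {w₀ : InfinitePlace K} (hw₀ : w₀.IsReal) {a : 𝓞 K} (ha : a ≠ 0)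
    (h : ∀ w ≠ w₀, w (a : K) < 1) :
    intHeight (a : K) = w₀ (a : K) ^ ((finrank ℚ K : ℝ)⁻¹) := by
  classical
  have h₀ : 1 ≤ w₀ (a : K) := one_le_of_lt_one ha fun w hw => h w hw
  have hprod : ∏ φ : K →+* ℂ, max 1 ‖φ (a : K)‖ = w₀ (a : K) := by
    rw [prod_embeddings_max_one_eq_prod_infinitePlace,
      Finset.prod_eq_single w₀ (fun w _ hw => by rw [max_eq_left (h w hw).le, one_pow])
        (fun h => absurd (Finset.mem_univ w₀) h),
      max_eq_right h₀, hw₀.mult_eq_one, pow_one]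
  rw [intHeight, hprod]

variable (K) in
theorem minkowskiConst_nonneg : 0 ≤ minkowskiConst K := by
  unfold minkowskiConst
  positivity

variable (K) in
theorem minkowskiConst_pow_finrank :
    minkowskiConst K ^ finrank ℚ K = (2 / Real.pi) ^ nrComplexPlaces K * √|(discr K : ℝ)| := by
  have hd : (finrank ℚ K : ℝ) ≠ 0 := Nat.cast_ne_zero.mpr finrank_pos.ne'
  have h2 : (1 : ℝ) / (2 * finrank ℚ K) * finrank ℚ K = 1 / 2 := by field_simp
  rw [minkowskiConst, mul_pow, ← Real.rpow_natCast, ← Real.rpow_natCast,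
    ← Real.rpow_mul (by positivity), ← Real.rpow_mul (abs_nonneg _), div_mul_cancel₀ _ hd, h2,
    ← Real.sqrt_eq_rpow, Real.rpow_natCast]

variable (K) in
theorem minkowskiBound_one_toReal :
    (minkowskiBound K ↑1).toReal =
      convexBodyLTFactor K * ((2 / Real.pi) ^ nrComplexPlaces K * √|(discr K : ℝ)|) := by
  simp_rw [minkowskiBound, volume_fundamentalDomain_fractionalIdealLatticeBasis,
    volume_fundamentalDomain_latticeBasis, ENNReal.toReal_mul, ENNReal.toReal_pow,
    ENNReal.toReal_inv, ENNReal.toReal_ofNat, ENNReal.coe_toReal, mixedEmbedding.finrank,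
    Units.val_one, FractionalIdeal.absNorm_one, Rat.cast_one, ENNReal.toReal_ofReal zero_le_one,
    one_mul]
  simp only [Real.coe_sqrt, coe_nnnorm, Int.norm_eq_abs]
  rw [convexBodyLTFactor, NNReal.coe_mul, NNReal.coe_pow, NNReal.coe_pow, NNReal.coe_real_pi,
    NNReal.coe_ofNat, ← card_add_two_mul_card_eq_rank K, pow_add, pow_mul]
  have h₁ : (1 / 2 : ℝ) ^ nrComplexPlaces K * 4 ^ nrComplexPlaces K = 2 ^ nrComplexPlaces K := by
    rw [← mul_pow]; norm_num
  have h₂ : Real.pi ^ nrComplexPlaces K * (2 / Real.pi) ^ nrComplexPlaces K =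
      2 ^ nrComplexPlaces K := by
    rw [← mul_pow, mul_div_cancel₀ _ Real.pi_ne_zero]
  field_simp
  linear_combination √|(discr K : ℝ)| * (h₁ - h₂)

theorem minkowskiBound_lt_convexBodyLTFactor_mul {B : NNReal}
    (hB : minkowskiConst K ^ finrank ℚ K < B) :
    minkowskiBound K ↑1 < convexBodyLTFactor K * B := by
  have hF : (0 : ℝ) < convexBodyLTFactor K :=
    NNReal.coe_pos.mpr (pos_iff_ne_zero.mpr (convexBodyLTFactor_ne_zero K))
  rw [← ENNReal.toReal_lt_toReal (minkowskiBound_lt_top K ↑1).ne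
      (ENNReal.mul_ne_top ENNReal.coe_ne_top ENNReal.coe_ne_top),
    minkowskiBound_one_toReal, ENNReal.toReal_mul, ENNReal.coe_toReal, ENNReal.coe_toReal,
    ← minkowskiConst_pow_finrank]
  exact mul_lt_mul_of_pos_left hB hF

theorem exists_primitive_element_lt_one_of_isReal {w₀ : InfinitePlace K} (hw₀ : w₀.IsReal)
    {B : ℝ} (hB : minkowskiConst K ^ finrank ℚ K < B) :
    ∃ a : 𝓞 K, a ≠ 0 ∧ ℚ⟮(a : K)⟯ = ⊤ ∧ (∀ w ≠ w₀, w (a : K) < 1) ∧ w₀ (a : K) < B := by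
  classical
  have hB₀ : 0 ≤ B := (pow_nonneg (minkowskiConst_nonneg K) _).trans hB.le
  lift B to NNReal using hB₀
  have hvol : minkowskiBound K ↑1 <
      MeasureTheory.volume (convexBodyLT K fun w ↦ if w = w₀ then B else 1) := by
    rw [convexBodyLT_volume, ← Finset.prod_erase_mul _ _ (Finset.mem_univ w₀)]
    simp_rw [ite_pow, one_pow]
    rw [Finset.prod_ite_eq']
    simp_rw [Finset.notMem_erase, ite_false, hw₀.mult_eq_one, one_mul, pow_one]
    exact minkowskiBound_lt_convexBodyLTFactor_mul hB
  obtain ⟨a, ha, hlt⟩ := exists_ne_zero_mem_ringOfIntegers_lt K hvol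
  have hlt_one : ∀ w ≠ w₀, w (a : K) < 1 := fun w hw => by simpa [hw] using hlt w
  exact ⟨a, ha, is_primitive_element_of_infinitePlace_lt ha hlt_one (Or.inl hw₀), hlt_one,
    by simpa using hlt w₀⟩

theorem finite_setOf_forall_infinitePlace_le (C : ℝ) :
    {a : 𝓞 K | ∀ w : InfinitePlace K, w (a : K) ≤ C}.Finite := by
  refine ((Embeddings.finite_of_norm_le K ℂ C).preimage
    RingOfIntegers.coe_injective.injOn).subset fun a ha => ?_
  exact ⟨RingOfIntegers.isIntegral_coe a, fun φ => ha (InfinitePlace.mk φ)⟩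

theorem exists_primitive_element_le_minkowskiConst_pow {w₀ : InfinitePlace K}
    (hw₀ : w₀.IsReal) :
    ∃ a : 𝓞 K, a ≠ 0 ∧ ℚ⟮(a : K)⟯ = ⊤ ∧ (∀ w ≠ w₀, w (a : K) < 1) ∧
      w₀ (a : K) ≤ minkowskiConst K ^ finrank ℚ K := by
  set C := minkowskiConst K ^ finrank ℚ K
  set S : Set (𝓞 K) :=
    {a | a ≠ 0 ∧ ℚ⟮(a : K)⟯ = ⊤ ∧ (∀ w ≠ w₀, w (a : K) < 1) ∧ w₀ (a : K) < C + 1}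
  have hC : 0 ≤ C := pow_nonneg (minkowskiConst_nonneg K) _
  have hS_fin : S.Finite := (finite_setOf_forall_infinitePlace_le (C + 1)).subset
    fun a ⟨_, _, hlt, hlt₀⟩ w => by
      by_cases hw : w = w₀
      · exact hw ▸ hlt₀.le
      · linarith [hlt w hw]
  have hS_ne : S.Nonempty := by
    obtain ⟨a, ha⟩ := exists_primitive_element_lt_one_of_isReal hw₀ (lt_add_one C)
    exact ⟨a, ha⟩
  obtain ⟨a, ⟨ha, hprim, hlt, haC⟩, hmin⟩ :=
    Set.exists_min_image S (fun a => w₀ (a : K)) hS_fin hS_ne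
  refine ⟨a, ha, hprim, hlt, not_lt.mp fun hCa => ?_⟩
  obtain ⟨b, hb, hbprim, hblt, hb₀⟩ :=
    exists_primitive_element_lt_one_of_isReal hw₀ (B := (C + w₀ (a : K)) / 2) (by linarith)
  have := hmin b ⟨hb, hbprim, hblt, by linarith⟩
  linarith

end NumberField

/-- Theorem 1.1: if $K$ has a real embedding, then there is $\alpha\in O_K$ with
$K=\mathbb{Q}(\alpha)$ and $H(\alpha)\le c_K$. -/
theorem statement12 (K : Type*) [Field K] [NumberField K]
    (hreal : ∃ v : InfinitePlace K, v.IsReal) :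
    ∃ α : 𝓞 K, IntermediateField.adjoin ℚ {(α : K)} = ⊤ ∧
      intHeight (α : K) ≤ minkowskiConst K := by
  obtain ⟨w₀, hw₀⟩ := hreal
  obtain ⟨a, ha, hprim, hlt, hle⟩ := exists_primitive_element_le_minkowskiConst_pow hw₀
  refine ⟨a, hprim, ?_⟩
  rw [intHeight_eq_of_lt_one hw₀ ha hlt]
  calc w₀ (a : K) ^ ((finrank ℚ K : ℝ)⁻¹)
      ≤ (minkowskiConst K ^ finrank ℚ K) ^ ((finrank ℚ K : ℝ)⁻¹) :=
        Real.rpow_le_rpow (apply_nonneg w₀ _) hle (by positivity)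
    _ = minkowskiConst K := Real.pow_rpow_inv_natCast (minkowskiConst_nonneg K) finrank_pos.ne'
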